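/- arXiv:2304.05836 — 5 statements merged into one kernel-verified Lean document; each statement's English description precedes it below -/
import Mathlib

section
/- Let f(C) = η_pa·Σ_{k=1}^K (1 − (c_b·Δ_k + c_b·c_2·C^{p−1})/D) − η_ca·K·(1 − C^{−y}) for C > 0. If y > 1 − p and η_pa·c_b·c_2·(1−p)·(2−p) ≥ D·y·(y+1)·η_ca, then f is strictly concave on the interval [1, ∞). -/
open Real

theorem stmt1 (p y D cb c2 ηpa ηca : ℝ)
    (hp0 : 0 < p) (hp1 : p < 1) (hy : 0 < y) (hD : 0 < D)
    (hcb : 0 < cb) (hc2 : 0 < c2) (hηpa : 0 < ηpa) (hηca : 0 < ηca)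
    (K : ℕ) (hK : 0 < K) (Δ : Fin K → ℝ) (hΔ : ∀ k, 0 ≤ Δ k)
    (f : ℝ → ℝ)
    (hf : ∀ C : ℝ, 0 < C → f C =
      ηpa * ∑ k, (1 - (cb * Δ k + cb * c2 * C ^ (p - 1)) / D)
        - ηca * K * (1 - C ^ (-y)))
    (hyp : y > 1 - p)
    (hcond : ηpa * cb * c2 * (1 - p) * (2 - p) ≥ D * y * (y + 1) * ηca) :
    StrictConcaveOn ℝ (Set.Ici (1 : ℝ)) f := by
  set S : ℝ := ∑ k : Fin K, (1 - cb * Δ k / D) with hS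
  set a : ℝ := ηpa * cb * c2 * K / D with ha
  set b : ℝ := ηca * K with hb
  have ha0 : 0 < a := by positivity
  have hb0 : 0 < b := by positivity
  set A : ℝ := ηpa * S - ηca * K with hA
  set h : ℝ → ℝ := fun C => A - a * C ^ (p - 1) + b * C ^ (-y) with hh
  set h1 : ℝ → ℝ := fun C => a * (1 - p) * C ^ (p - 2) - b * y * C ^ (-y - 1) with hh1
  -- f agrees with h on Ici 1
  have hfg : Set.EqOn f h (Set.Ici (1 : ℝ)) := by
    intro C hC
    have hC0 : (0 : ℝ) < C := lt_of_lt_of_le one_pos hC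
    have hsum : ∑ k : Fin K, (1 - (cb * Δ k + cb * c2 * C ^ (p - 1)) / D)
        = S - K * (cb * c2 * C ^ (p - 1) / D) := by
      rw [hS]
      rw [show (∑ k : Fin K, (1 - (cb * Δ k + cb * c2 * C ^ (p - 1)) / D))
          = ∑ k : Fin K, ((1 - cb * Δ k / D) - cb * c2 * C ^ (p - 1) / D) from
        Finset.sum_congr rfl fun k _ => by ring]
      rw [Finset.sum_sub_distrib, Finset.sum_const, Finset.card_univ, Fintype.card_fin,
        nsmul_eq_mul]
    rw [hf C hC0, hsum, hh, hA, ha, hb]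
    field_simp
    ring
  have hd1 : ∀ x : ℝ, 0 < x → HasDerivAt h (h1 x) x := by
    intro x hx
    have d1 : HasDerivAt (fun C : ℝ => C ^ (p - 1)) ((p - 1) * x ^ (p - 1 - 1)) x :=
      Real.hasDerivAt_rpow_const (Or.inl hx.ne')
    have d2 : HasDerivAt (fun C : ℝ => C ^ (-y)) ((-y) * x ^ (-y - 1)) x :=
      Real.hasDerivAt_rpow_const (Or.inl hx.ne')
    have := ((hasDerivAt_const x A).sub (d1.const_mul a)).add (d2.const_mul b)
    convert this using 1
    · rfl
    · rfl
    · rfl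
    rw [hh1]
    ring_nf
  have hd2 : ∀ x : ℝ, 0 < x →
      HasDerivAt h1 (-(a * (1 - p) * (2 - p)) * x ^ (p - 3) + b * y * (y + 1) * x ^ (-y - 2)) x := by
    intro x hx
    have d1 : HasDerivAt (fun C : ℝ => C ^ (p - 2)) ((p - 2) * x ^ (p - 2 - 1)) x :=
      Real.hasDerivAt_rpow_const (Or.inl hx.ne')
    have d2 : HasDerivAt (fun C : ℝ => C ^ (-y - 1)) ((-y - 1) * x ^ (-y - 1 - 1)) x :=
      Real.hasDerivAt_rpow_const (Or.inl hx.ne')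
    have := (d1.const_mul (a * (1 - p))).sub (d2.const_mul (b * y))
    convert this using 1
    · rfl
    · rfl
    · rfl
    have e1 : p - 2 - 1 = p - 3 := by ring
    have e2 : -y - 1 - 1 = -y - 2 := by ring
    rw [e1, e2]
    ring
  apply strictConcaveOn_of_deriv2_neg (convex_Ici 1)
  · intro x hx
    have hx0 : (0 : ℝ) < x := lt_of_lt_of_le one_pos hx
    exact ((hd1 x hx0).continuousAt.continuousWithinAt.congr
      (fun z hz => hfg hz) (hfg hx))
  · intro x hx
    rw [interior_Ici] at hx
    have hx1 : (1 : ℝ) < x := hx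
    have hx0 : (0 : ℝ) < x := lt_trans one_pos hx1
    -- f = h eventually near x (x ∈ Ioi 1, open, subset of Ici 1)
    have hev : f =ᶠ[nhds x] h :=
      Filter.eventuallyEq_of_mem (isOpen_Ioi.mem_nhds hx1)
        (fun z hz => hfg (le_of_lt (show (1 : ℝ) < z from hz)))
    have hderiv_ev : deriv f =ᶠ[nhds x] h1 := by
      have : ∀ᶠ z in nhds x, 0 < z :=
        Filter.tendsto_id.eventually_const_lt hx0
      filter_upwards [hev.eventuallyEq_nhds, this] with z hz hz0
      rw [hz.deriv_eq, (hd1 z hz0).deriv]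
    have : deriv^[2] f x = -(a * (1 - p) * (2 - p)) * x ^ (p - 3) + b * y * (y + 1) * x ^ (-y - 2) := by
      simp only [Function.iterate_succ, Function.iterate_zero, Function.comp_apply, id]
      rw [hderiv_ev.deriv_eq, (hd2 x hx0).deriv]
    rw [this]
    -- key inequality
    have hab : b * y * (y + 1) ≤ a * (1 - p) * (2 - p) := by
      rw [ha, hb]
      rw [div_mul_eq_mul_div, div_mul_eq_mul_div, le_div_iff₀ hD]
      have hKpos : (0 : ℝ) < (K : ℝ) := Nat.cast_pos.mpr hK
      nlinarith [mul_le_mul_of_nonneg_right hcond hKpos.le]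
    have hpow : x ^ (-y - 2) < x ^ (p - 3) :=
      (Real.rpow_lt_rpow_left_iff hx1).2 (by linarith)
    have hbpos : 0 < b * y * (y + 1) := by positivity
    nlinarith [mul_lt_mul_of_pos_left hpow hbpos,
      mul_le_mul_of_nonneg_right hab (Real.rpow_pos_of_pos hx0 (p - 3)).le]
end

section
/- Suppose c_a·‖g(u) − g(v)‖ ≤ ‖u − v‖ ≤ c_b·‖g(u) − g(v)‖ for all u, v ∈ E, and suppose Σ_{t=1}^T ‖g(s_t) − g(s_d)‖ ≤ c_2·T^p. If c_a·Δ ≥ 2·c_2·c_b·T^{p−1}, where Δ = ‖g(s_d) − g(s_o)‖, then (1/T)·Σ_{t=1}^T ‖s_t − s_o‖ ≥ (c_a·Δ + c_2·c_b·T^{p−1})/4. -/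
/-!
By the triangle inequality in `F` and the lower Lipschitz bound,
`c_a Δ ≤ ‖s_t - s_o‖ + c_a ‖g(s_t) - g(s_d)‖` for every `t`. Averaging and using the regret bound
gives an average distance of at least `c_a Δ - c_a c_2 T^{p-1}`. Since `Δ > 0`, the two-sided bound
forces `c_a ≤ c_b`, and the hypothesis `c_a Δ ≥ 2 c_2 c_b T^{p-1}` leaves enough margin to reach
`(c_a Δ + c_2 c_b T^{p-1}) / 4`.
-/

open Real

section LowerLipschitz

variable {E F : Type*} [SeminormedAddCommGroup E] [SeminormedAddCommGroup F]
  {g : E → F} {ca : ℝ}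

theorem mul_norm_sub_le_norm_sub_add_mul_norm_sub (hca : 0 ≤ ca)
    (hlow : ∀ u v : E, ca * ‖g u - g v‖ ≤ ‖u - v‖) (x a b : E) :
    ca * ‖g a - g b‖ ≤ ‖x - b‖ + ca * ‖g x - g a‖ := by
  have htri : ‖g a - g b‖ ≤ ‖g x - g a‖ + ‖g x - g b‖ := by
    simpa only [norm_sub_rev (g a) (g x)] using norm_sub_le_norm_sub_add_norm_sub (g a) (g x) (g b)
  linarith [hlow x b, mul_le_mul_of_nonneg_left htri hca]

theorem card_mul_le_sum_norm_sub_add_mul_sum {ι : Type*} [Fintype ι] (hca : 0 ≤ ca)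
    (hlow : ∀ u v : E, ca * ‖g u - g v‖ ≤ ‖u - v‖) (s : ι → E) (a b : E) :
    Fintype.card ι * (ca * ‖g a - g b‖) ≤
      ∑ t, ‖s t - b‖ + ca * ∑ t, ‖g (s t) - g a‖ := by
  rw [Finset.mul_sum, ← Finset.sum_add_distrib, ← nsmul_eq_mul, ← Finset.card_univ,
    ← Finset.sum_const]
  exact Finset.sum_le_sum fun t _ ↦ mul_norm_sub_le_norm_sub_add_mul_norm_sub hca hlow (s t) a b

theorem le_of_bilipschitz {cb : ℝ} (hlow : ∀ u v : E, ca * ‖g u - g v‖ ≤ ‖u - v‖)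
    (hupp : ∀ u v : E, ‖u - v‖ ≤ cb * ‖g u - g v‖) {u v : E} (huv : 0 < ‖g u - g v‖) :
    ca ≤ cb :=
  le_of_mul_le_mul_right ((hlow u v).trans (hupp u v)) huv

end LowerLipschitz

theorem stmt11_general {E F : Type*} [NormedAddCommGroup E]
    [NormedAddCommGroup F]
    (g : E → F) (ca cb c2 p : ℝ) (hca : 0 < ca) (hcb : 0 < cb) (hc2 : 0 < c2)
    (T : ℕ) (hT : 0 < T) (s : Fin T → E) (so sd : E)
    (hlow : ∀ u v : E, ca * ‖g u - g v‖ ≤ ‖u - v‖)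
    (hupp : ∀ u v : E, ‖u - v‖ ≤ cb * ‖g u - g v‖)
    (hreg : ∑ t, ‖g (s t) - g sd‖ ≤ c2 * (T : ℝ) ^ p)
    (hbig : ca * ‖g sd - g so‖ ≥ 2 * c2 * cb * (T : ℝ) ^ (p - 1)) :
    (1 / (T : ℝ)) * ∑ t, ‖s t - so‖ ≥
      (ca * ‖g sd - g so‖ + c2 * cb * (T : ℝ) ^ (p - 1)) / 4 := by
  have hsum := card_mul_le_sum_norm_sub_add_mul_sum hca.le hlow s sd so
  rw [Fintype.card_fin] at hsum
  have hT0 : (0 : ℝ) < T := by exact_mod_cast hT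
  set Δ := ‖g sd - g so‖
  set Y := (T : ℝ) ^ (p - 1)
  have hY : 0 < Y := rpow_pos_of_pos hT0 _
  have hTY : (T : ℝ) ^ p = T * Y := by
    rw [mul_comm, ← rpow_add_one hT0.ne']
    norm_num
  have hX : 0 < c2 * cb * Y := by positivity
  have hΔ : 0 < Δ := pos_of_mul_pos_right (hX.trans_le (by linarith)) hca.le
  have hcab : ca ≤ cb := le_of_bilipschitz hlow hupp hΔ
  have hreg' : ca * ∑ t, ‖g (s t) - g sd‖ ≤ cb * (c2 * (T * Y)) :=
    calc ca * ∑ t, ‖g (s t) - g sd‖ ≤ ca * (c2 * (T * Y)) :=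
          mul_le_mul_of_nonneg_left (hTY ▸ hreg) hca.le
      _ ≤ cb * (c2 * (T * Y)) := mul_le_mul_of_nonneg_right hcab (by positivity)
  have hmargin : (ca * Δ + c2 * cb * Y) / 4 ≤ ca * Δ - cb * (c2 * Y) := by linarith
  rw [ge_iff_le, one_div, inv_mul_eq_div, le_div_iff₀ hT0]
  linarith [mul_le_mul_of_nonneg_right hmargin hT0.le]

theorem stmt11 {E F : Type*} [NormedAddCommGroup E] [NormedSpace ℝ E]
    [NormedAddCommGroup F] [NormedSpace ℝ F]
    (g : E → F) (ca cb c2 p : ℝ) (hca : 0 < ca) (hcb : 0 < cb) (hc2 : 0 < c2)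
    (hp0 : 0 < p) (hp1 : p < 1)
    (T : ℕ) (hT : 0 < T) (s : Fin T → E) (so sd : E)
    (hlow : ∀ u v : E, ca * ‖g u - g v‖ ≤ ‖u - v‖)
    (hupp : ∀ u v : E, ‖u - v‖ ≤ cb * ‖g u - g v‖)
    (hreg : ∑ t, ‖g (s t) - g sd‖ ≤ c2 * (T : ℝ) ^ p)
    (hbig : ca * ‖g sd - g so‖ ≥ 2 * c2 * cb * (T : ℝ) ^ (p - 1)) :
    (1 / (T : ℝ)) * ∑ t, ‖s t - so‖ ≥
      (ca * ‖g sd - g so‖ + c2 * cb * (T : ℝ) ^ (p - 1)) / 4 :=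
  stmt11_general g ca cb c2 p hca hcb hc2 T hT s so sd hlow hupp hreg hbig
end

section
/- Suppose c_a·‖g(u) − g(v)‖ ≤ ‖u − v‖ ≤ c_b·‖g(u) − g(v)‖ for all u, v ∈ E, and suppose c_0·T^p ≤ Σ_{t=1}^T ‖g(s_t) − g(s_d)‖. If c_a·c_0·T^{p−1} ≥ 2·c_b·Δ, where Δ = ‖g(s_d) − g(s_o)‖, then (1/T)·Σ_{t=1}^T ‖s_t − s_o‖ ≥ (c_b·Δ + c_a·c_0·T^{p−1})/4. -/
/-!
By the lower bound `ca * ‖g u - g v‖ ≤ ‖u - v‖` and the triangle inequality through `g sd`,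
each reconstruction satisfies `‖s t - so‖ ≥ ca * (‖g (s t) - g sd‖ - Δ)`. Averaging and using the
growth assumption gives a mean distance of at least `ca * c0 * T ^ (p - 1) - ca * Δ`. Since
`ca * Δ ≤ ‖sd - so‖ ≤ cb * Δ`, the hypothesis `ca * c0 * T ^ (p - 1) ≥ 2 * cb * Δ` makes this at
least a quarter of `cb * Δ + ca * c0 * T ^ (p - 1)`.
-/

open Real

section LowerLipschitz

variable {E F : Type*} [SeminormedAddCommGroup E] [SeminormedAddCommGroup F]
  {g : E → F} {ca : ℝ}

lemma mul_norm_sub_sub_norm_sub_le_norm_sub (hca : 0 ≤ ca)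
    (hlow : ∀ u v : E, ca * ‖g u - g v‖ ≤ ‖u - v‖) (u v w : E) :
    ca * (‖g u - g w‖ - ‖g w - g v‖) ≤ ‖u - v‖ := by
  have htri : ‖g u - g w‖ - ‖g w - g v‖ ≤ ‖g u - g v‖ := by
    linarith [norm_sub_le_norm_sub_add_norm_sub (g u) (g v) (g w), norm_sub_rev (g v) (g w)]
  exact (mul_le_mul_of_nonneg_left htri hca).trans (hlow u v)

lemma mul_sum_norm_sub_sub_card_mul_le_sum_norm_sub {ι : Type*} [Fintype ι] (hca : 0 ≤ ca)
    (hlow : ∀ u v : E, ca * ‖g u - g v‖ ≤ ‖u - v‖) (s : ι → E) (v w : E) :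
    ca * ∑ t, ‖g (s t) - g w‖ - Fintype.card ι * (ca * ‖g w - g v‖) ≤ ∑ t, ‖s t - v‖ := by
  calc ca * ∑ t, ‖g (s t) - g w‖ - Fintype.card ι * (ca * ‖g w - g v‖)
      = ∑ t, ca * (‖g (s t) - g w‖ - ‖g w - g v‖) := by
        simp only [mul_sub, Finset.sum_sub_distrib, Finset.mul_sum, Finset.sum_const,
          Finset.card_univ, nsmul_eq_mul]
    _ ≤ ∑ t, ‖s t - v‖ :=
        Finset.sum_le_sum fun t _ => mul_norm_sub_sub_norm_sub_le_norm_sub hca hlow (s t) v w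

end LowerLipschitz

theorem stmt12_general {E F : Type*} [NormedAddCommGroup E] [NormedSpace ℝ E]
    [NormedAddCommGroup F] [NormedSpace ℝ F]
    (g : E → F) (ca cb c0 p : ℝ) (hca : 0 < ca)
    (T : ℕ) (hT : 0 < T) (s : Fin T → E) (so sd : E)
    (hlow : ∀ u v : E, ca * ‖g u - g v‖ ≤ ‖u - v‖)
    (hupp : ∀ u v : E, ‖u - v‖ ≤ cb * ‖g u - g v‖)
    (hreg : c0 * (T : ℝ) ^ p ≤ ∑ t, ‖g (s t) - g sd‖)
    (hbig : ca * c0 * (T : ℝ) ^ (p - 1) ≥ 2 * cb * ‖g sd - g so‖) :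
    (1 / (T : ℝ)) * ∑ t, ‖s t - so‖ ≥
      (cb * ‖g sd - g so‖ + ca * c0 * (T : ℝ) ^ (p - 1)) / 4 := by
  have hTpos : (0 : ℝ) < T := by exact_mod_cast hT
  have hsum := mul_sum_norm_sub_sub_card_mul_le_sum_norm_sub hca.le hlow s so sd
  rw [Fintype.card_fin] at hsum
  have hmean : ca * c0 * (T : ℝ) ^ (p - 1) - ca * ‖g sd - g so‖ ≤
      (1 / (T : ℝ)) * ∑ t, ‖s t - so‖ := by
    have hpow : (T : ℝ) ^ (p - 1) * T = (T : ℝ) ^ p := by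
      rw [rpow_sub_one hTpos.ne', div_mul_cancel₀ _ hTpos.ne']
    rw [one_div_mul_eq_div, le_div_iff₀ hTpos]
    calc (ca * c0 * (T : ℝ) ^ (p - 1) - ca * ‖g sd - g so‖) * T
        = ca * (c0 * (T : ℝ) ^ p) - T * (ca * ‖g sd - g so‖) := by rw [← hpow]; ring
      _ ≤ ca * ∑ t, ‖g (s t) - g sd‖ - T * (ca * ‖g sd - g so‖) := by gcongr
      _ ≤ ∑ t, ‖s t - so‖ := hsum
  linarith [hlow sd so, hupp sd so, norm_nonneg (sd - so)]

theorem stmt12 {E F : Type*} [NormedAddCommGroup E] [NormedSpace ℝ E]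
    [NormedAddCommGroup F] [NormedSpace ℝ F]
    (g : E → F) (ca cb c0 p : ℝ) (hca : 0 < ca) (hcb : 0 < cb) (hc0 : 0 < c0)
    (hp0 : 0 < p) (hp1 : p < 1)
    (T : ℕ) (hT : 0 < T) (s : Fin T → E) (so sd : E)
    (hlow : ∀ u v : E, ca * ‖g u - g v‖ ≤ ‖u - v‖)
    (hupp : ∀ u v : E, ‖u - v‖ ≤ cb * ‖g u - g v‖)
    (hreg : c0 * (T : ℝ) ^ p ≤ ∑ t, ‖g (s t) - g sd‖)
    (hbig : ca * c0 * (T : ℝ) ^ (p - 1) ≥ 2 * cb * ‖g sd - g so‖) :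
    (1 / (T : ℝ)) * ∑ t, ‖s t - so‖ ≥
      (cb * ‖g sd - g so‖ + ca * c0 * (T : ℝ) ^ (p - 1)) / 4 :=
  stmt12_general g ca cb c0 p hca T hT s so sd hlow hupp hreg hbig
end

section
/- Let H be a real inner product space, let w_{d,1}, …, w_{d,K} and w_{o,1}, …, w_{o,K} be vectors in H with ‖w_{d,k} − w_{o,k}‖ ≤ Δ_k for each k, and let s_1, …, s_n ∈ H with ‖s_j‖ ≤ 1 and labels l_1, …, l_n ∈ ℝ. Then 1 − (1/n)·Σ_{j=1}^n |⟨(1/K)·Σ_{k=1}^K w_{d,k}, s_j⟩ − l_j| ≥ (1 − (1/n)·Σ_{j=1}^n |⟨(1/K)·Σ_{k=1}^K w_{o,k}, s_j⟩ − l_j|) − (1/K)·Σ_{k=1}^K Δ_k. In words: the model utility computed from the protected (distorted) parameters is at least the utility computed from the original parameters minus the average distortion extent. -/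
/-! The mean absolute error `w ↦ (1/n) ∑ⱼ |⟪w, sⱼ⟫ - lⱼ|` is 1-Lipschitz when every `‖sⱼ‖ ≤ 1`
(Cauchy–Schwarz), and averaging moves the parameters by at most the average of the `Δₖ`
(triangle inequality). -/

open scoped RealInnerProductSpace

open Finset

theorem norm_smul_sum_sub_smul_sum_le {E ι : Type*} [SeminormedAddCommGroup E] [NormedSpace ℝ E]
    [Fintype ι] {c : ℝ} (hc : 0 ≤ c) (u v : ι → E) (Δ : ι → ℝ) (h : ∀ k, ‖u k - v k‖ ≤ Δ k) :
    ‖c • ∑ k, u k - c • ∑ k, v k‖ ≤ c * ∑ k, Δ k := by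
  rw [← smul_sub, ← sum_sub_distrib, norm_smul, Real.norm_of_nonneg hc]
  gcongr
  exact (norm_sum_le _ _).trans (sum_le_sum fun k _ => h k)

section

variable {H : Type*} [SeminormedAddCommGroup H] [InnerProductSpace ℝ H]

theorem abs_inner_sub_le_abs_inner_sub_add_norm_sub {s : H} (hs : ‖s‖ ≤ 1) (x y : H) (l : ℝ) :
    |⟪x, s⟫ - l| ≤ |⟪y, s⟫ - l| + ‖x - y‖ :=
  calc |⟪x, s⟫ - l| = |(⟪y, s⟫ - l) + ⟪x - y, s⟫| := by rw [inner_sub_left]; ring_nf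
    _ ≤ |⟪y, s⟫ - l| + |⟪x - y, s⟫| := abs_add_le _ _
    _ ≤ |⟪y, s⟫ - l| + ‖x - y‖ := by
      gcongr
      exact (abs_real_inner_le_norm _ _).trans (mul_le_of_le_one_right (norm_nonneg _) hs)

theorem mean_abs_inner_sub_le_add_norm_sub {ι : Type*} [Fintype ι] {s : ι → H}
    (hs : ∀ j, ‖s j‖ ≤ 1) (l : ι → ℝ) (x y : H) :
    (1 / (Fintype.card ι : ℝ)) * ∑ j, |⟪x, s j⟫ - l j| ≤
      (1 / (Fintype.card ι : ℝ)) * ∑ j, |⟪y, s j⟫ - l j| + ‖x - y‖ :=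
  calc (1 / (Fintype.card ι : ℝ)) * ∑ j, |⟪x, s j⟫ - l j|
      ≤ (1 / (Fintype.card ι : ℝ)) * ∑ j, (|⟪y, s j⟫ - l j| + ‖x - y‖) := by
        gcongr with j
        exact abs_inner_sub_le_abs_inner_sub_add_norm_sub (hs j) x y (l j)
    _ = (1 / (Fintype.card ι : ℝ)) * ∑ j, |⟪y, s j⟫ - l j| +
          (Fintype.card ι / Fintype.card ι : ℝ) * ‖x - y‖ := by
        rw [sum_add_distrib, sum_const, card_univ, nsmul_eq_mul]
        ring
    _ ≤ (1 / (Fintype.card ι : ℝ)) * ∑ j, |⟪y, s j⟫ - l j| + ‖x - y‖ := by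
        gcongr
        exact mul_le_of_le_one_left (norm_nonneg _) (div_self_le_one _)

end

theorem stmt13_general {H : Type*} [NormedAddCommGroup H] [InnerProductSpace ℝ H]
    (K n : ℕ)
    (Δ : Fin K → ℝ)
    (wd wo : Fin K → H) (hw : ∀ k, ‖wd k - wo k‖ ≤ Δ k)
    (s : Fin n → H) (hs : ∀ j, ‖s j‖ ≤ 1) (l : Fin n → ℝ) :
    1 - (1 / (n : ℝ)) * ∑ j, |⟪(1 / (K : ℝ)) • ∑ k, wd k, s j⟫ - l j| ≥
      (1 - (1 / (n : ℝ)) * ∑ j, |⟪(1 / (K : ℝ)) • ∑ k, wo k, s j⟫ - l j|)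
        - (1 / (K : ℝ)) * ∑ k, Δ k := by
  have hmean := mean_abs_inner_sub_le_add_norm_sub hs l
    ((1 / (K : ℝ)) • ∑ k, wd k) ((1 / (K : ℝ)) • ∑ k, wo k)
  have havg := norm_smul_sum_sub_smul_sum_le (c := 1 / (K : ℝ)) (by positivity) wd wo Δ hw
  rw [Fintype.card_fin] at hmean
  linarith

theorem stmt13 {H : Type*} [NormedAddCommGroup H] [InnerProductSpace ℝ H]
    (K n : ℕ) (hK : 0 < K) (hn : 0 < n)
    (Δ : Fin K → ℝ) (hΔ : ∀ k, 0 ≤ Δ k)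
    (wd wo : Fin K → H) (hw : ∀ k, ‖wd k - wo k‖ ≤ Δ k)
    (s : Fin n → H) (hs : ∀ j, ‖s j‖ ≤ 1) (l : Fin n → ℝ) :
    1 - (1 / (n : ℝ)) * ∑ j, |⟪(1 / (K : ℝ)) • ∑ k, wd k, s j⟫ - l j| ≥
      (1 - (1 / (n : ℝ)) * ∑ j, |⟪(1 / (K : ℝ)) • ∑ k, wo k, s j⟫ - l j|)
        - (1 / (K : ℝ)) * ∑ k, Δ k :=
  stmt13_general K n Δ wd wo hw s hs l
end

section
/- Let a_{11}, a_{12}, a_{21}, a_{22}, a_{31}, a_{32}, a_{41}, a_{42}, c_1, c_2, c_3, c_4 be real numbers with a_{11}·a_{41}·a_{32}·a_{22} − a_{31}·a_{12}·a_{21}·a_{42} ≠ 0, and define v_1 = (a_{31}·a_{41}·a_{21}·c_4 − a_{31}·a_{41}·a_{22}·c_3 − a_{31}·a_{21}·a_{42}·c_2 + a_{41}·a_{32}·a_{22}·c_1)/(a_{11}·a_{41}·a_{32}·a_{22} − a_{31}·a_{12}·a_{21}·a_{42}), v_2 = (a_{11}·a_{41}·a_{32}·c_4 − a_{11}·a_{32}·a_{42}·c_2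 − a_{31}·a_{12}·a_{42}·c_3 + a_{12}·a_{32}·a_{42}·c_1)/(a_{11}·a_{41}·a_{32}·a_{22} − a_{31}·a_{12}·a_{21}·a_{42}), v_3 = (−a_{11}·a_{41}·a_{21}·c_4 + a_{11}·a_{41}·a_{22}·c_3 + a_{11}·a_{21}·a_{42}·c_2 − a_{12}·a_{21}·a_{42}·c_1)/(a_{11}·a_{41}·a_{32}·a_{22} − a_{31}·a_{12}·a_{21}·a_{42}). If any of the following holds: (i) v_2·a_{21} = 0 and v_3·a_{32} = 0; (ii) v_1·a_{11} = 0 and v_3·a_{31} = 0; (iii) v_1·a_{11} = v_2·a_{21} = 0 and v_3·a_{31}·a_{32} = 0; (iv) v_1·a_{11} = v_2·a_{21} = 0, a_{31}·a_{32}·v_3 ≠ 0, and a_{31}·a_{32} < 0 — then there exist real numbers x_1, x_3 ≥ 0 with x_1 + x_3 = 1 satisfying v_1·a_{11}·x_1 = 0, v_2·a_{21}·x_3 = 0, and v_3·a_{31}·x_1 + v_3·a_{32}·x_3 = 0. -/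
/-! In cases (i) and (ii) a pure outcome (`x₃ = 1`, resp. `x₁ = 1`) works. In cases (iii) and (iv)
the numbers `v₃ a₃₁` and `v₃ a₃₂` have product `v₃² a₃₁ a₃₂ ≤ 0`, so `0` lies on the segment
between them, and the barycentric weights of `0` on that segment give `x₁, x₃`. -/

theorem exists_convex_weights_of_mul_nonpos {𝕜 : Type*} [Field 𝕜] [LinearOrder 𝕜]
    [IsStrictOrderedRing 𝕜] {p q : 𝕜} (h : p * q ≤ 0) :
    ∃ x y : 𝕜, 0 ≤ x ∧ 0 ≤ y ∧ x + y = 1 ∧ p * x + q * y = 0 := by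
  have hmem : (0 : 𝕜) ∈ segment 𝕜 p q := by
    rw [segment_eq_uIcc, Set.mem_uIcc]
    rcases mul_nonpos_iff.1 h with ⟨hp, hq⟩ | ⟨hp, hq⟩
    · exact Or.inr ⟨hq, hp⟩
    · exact Or.inl ⟨hp, hq⟩
  obtain ⟨x, y, hx, hy, hxy, hzero⟩ := hmem
  exact ⟨x, y, hx, hy, hxy, by simpa only [smul_eq_mul, mul_comm] using hzero⟩

theorem stmt17_general (a11 a21 a31 a32 : ℝ)
    (v1 v2 v3 : ℝ)
    (hcase : (v2 * a21 = 0 ∧ v3 * a32 = 0)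
      ∨ (v1 * a11 = 0 ∧ v3 * a31 = 0)
      ∨ (v1 * a11 = 0 ∧ v2 * a21 = 0 ∧ v3 * a31 * a32 = 0)
      ∨ (v1 * a11 = 0 ∧ v2 * a21 = 0 ∧ a31 * a32 * v3 ≠ 0 ∧ a31 * a32 < 0)) :
    ∃ x1 x3 : ℝ, 0 ≤ x1 ∧ 0 ≤ x3 ∧ x1 + x3 = 1 ∧
      v1 * a11 * x1 = 0 ∧ v2 * a21 * x3 = 0 ∧
        v3 * a31 * x1 + v3 * a32 * x3 = 0 := by
  have mixed (h1 : v1 * a11 = 0) (h2 : v2 * a21 = 0) (hopp : v3 * a31 * (v3 * a32) ≤ 0) :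
      ∃ x1 x3 : ℝ, 0 ≤ x1 ∧ 0 ≤ x3 ∧ x1 + x3 = 1 ∧
        v1 * a11 * x1 = 0 ∧ v2 * a21 * x3 = 0 ∧ v3 * a31 * x1 + v3 * a32 * x3 = 0 := by
    obtain ⟨x1, x3, hx1, hx3, hsum, hzero⟩ := exists_convex_weights_of_mul_nonpos hopp
    exact ⟨x1, x3, hx1, hx3, hsum, by rw [h1, zero_mul], by rw [h2, zero_mul], hzero⟩
  rcases hcase with ⟨h2, h3⟩ | ⟨h1, h3⟩ | ⟨h1, h2, h3⟩ | ⟨h1, h2, -, hlt⟩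
  · exact ⟨0, 1, le_rfl, zero_le_one, zero_add 1, by simp, by simp [h2], by simp [h3]⟩
  · exact ⟨1, 0, zero_le_one, le_rfl, add_zero 1, by simp [h1], by simp, by simp [h3]⟩
  · exact mixed h1 h2 (le_of_eq (by linear_combination v3 * h3))
  · refine mixed h1 h2 ?_
    calc v3 * a31 * (v3 * a32) = v3 * v3 * (a31 * a32) := by ring
      _ ≤ 0 := mul_nonpos_of_nonneg_of_nonpos (mul_self_nonneg v3) hlt.le

theorem stmt17 (a11 a12 a21 a22 a31 a32 a41 a42 c1 c2 c3 c4 : ℝ)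
    (hdet : a11 * a41 * a32 * a22 - a31 * a12 * a21 * a42 ≠ 0)
    (v1 v2 v3 : ℝ)
    (hv1 : v1 = (a31 * a41 * a21 * c4 - a31 * a41 * a22 * c3
        - a31 * a21 * a42 * c2 + a41 * a32 * a22 * c1)
      / (a11 * a41 * a32 * a22 - a31 * a12 * a21 * a42))
    (hv2 : v2 = (a11 * a41 * a32 * c4 - a11 * a32 * a42 * c2
        - a31 * a12 * a42 * c3 + a12 * a32 * a42 * c1)
      / (a11 * a41 * a32 * a22 - a31 * a12 * a21 * a42))
    (hv3 : v3 = (-(a11 * a41 * a21 * c4) + a11 * a41 * a22 * c3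
        + a11 * a21 * a42 * c2 - a12 * a21 * a42 * c1)
      / (a11 * a41 * a32 * a22 - a31 * a12 * a21 * a42))
    (hcase : (v2 * a21 = 0 ∧ v3 * a32 = 0)
      ∨ (v1 * a11 = 0 ∧ v3 * a31 = 0)
      ∨ (v1 * a11 = 0 ∧ v2 * a21 = 0 ∧ v3 * a31 * a32 = 0)
      ∨ (v1 * a11 = 0 ∧ v2 * a21 = 0 ∧ a31 * a32 * v3 ≠ 0 ∧ a31 * a32 < 0)) :
    ∃ x1 x3 : ℝ, 0 ≤ x1 ∧ 0 ≤ x3 ∧ x1 + x3 = 1 ∧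
      v1 * a11 * x1 = 0 ∧ v2 * a21 * x3 = 0 ∧
        v3 * a31 * x1 + v3 * a32 * x3 = 0 :=
  stmt17_general a11 a21 a31 a32 v1 v2 v3 hcase
end
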